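/- Let G ≅ ℤ_p² = H × Γ with H, Γ ≅ ℤ_p, let Λ(G) = ℤ_p[[T₁,T₂]] and Λ(Γ) = ℤ_p[[T₂]] with the surjection Λ(G) → Λ(Γ) sending T₁ to 0. Let M be a finitely generated Λ(G)-module such that M/T₁M is a finitely generated torsion Λ(Γ)-module. Then M is a torsion Λ(G)-module. -/

import Mathlib

/-!
The coinvariants `M/T₁M` being torsion means `(M/T₁M)_𝔭 = 0` at the prime
`𝔭 = (T₁)`. For finitely generated `M`, `Supp(M/IM) = Supp M ∩ V(I)` (Nakayama), so `M_𝔭 = 0`: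
every element of `M` is killed by something outside `𝔭`, in particular by something nonzero.
-/

theorem MvPowerSeries.prime_X_zero {R : Type*} [CommRing R] [IsDomain R] (n : ℕ) :
    Prime (X 0 : MvPowerSeries (Fin (n + 1)) R) := by
  have := NoZeroDivisors.to_isDomain (MvPowerSeries (Fin n) R)
  rw [← MulEquiv.prime_iff (finSuccEquiv R n), finSuccEquiv_X_zero]
  exact PowerSeries.X_prime

theorem Module.exists_smul_eq_zero_of_quotient_smul_top {R M : Type*} [CommRing R]
    [AddCommGroup M] [Module R M] [Module.Finite R M] (p : PrimeSpectrum R) {I : Ideal R}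
    (hI : I ≤ p.asIdeal) (h : ∀ x : M ⧸ I • (⊤ : Submodule R M), ∃ r ∉ p.asIdeal, r • x = 0)
    (m : M) : ∃ r ∉ p.asIdeal, r • m = 0 := by
  have hM : p ∉ support R M := fun hp ↦ notMem_support_iff'.2 h <| by
    rw [support_quotient]
    exact ⟨hp, hI⟩
  exact notMem_support_iff'.1 hM m

/-- Let `Λ(G) = ℤ_p[[T₁, T₂]]` and `Λ(Γ) = ℤ_p[[T₂]] = Λ(G)/(T₁)`.
If `M` is a finitely generated `Λ(G)`-module such that the coinvariants `M/T₁M` form a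
torsion `Λ(Γ)`-module (every element is killed by some element not in `(T₁)`), then `M`
is a torsion `Λ(G)`-module. -/
theorem statement16 (p : ℕ) [Fact p.Prime]
    (M : Type) [AddCommGroup M] [Module (MvPowerSeries (Fin 2) ℤ_[p]) M]
    [Module.Finite (MvPowerSeries (Fin 2) ℤ_[p]) M]
    (h : ∀ x : M ⧸ (Ideal.span {(MvPowerSeries.X (0 : Fin 2) : MvPowerSeries (Fin 2) ℤ_[p])} •
        (⊤ : Submodule (MvPowerSeries (Fin 2) ℤ_[p]) M)),
      ∃ r : MvPowerSeries (Fin 2) ℤ_[p],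
        r ∉ Ideal.span {(MvPowerSeries.X (0 : Fin 2) : MvPowerSeries (Fin 2) ℤ_[p])} ∧
        r • x = 0) :
    ∀ m : M, ∃ r : MvPowerSeries (Fin 2) ℤ_[p], r ≠ 0 ∧ r • m = 0 := by
  have hX : Prime (MvPowerSeries.X (0 : Fin 2) : MvPowerSeries (Fin 2) ℤ_[p]) :=
    MvPowerSeries.prime_X_zero 1
  let 𝔭 : PrimeSpectrum (MvPowerSeries (Fin 2) ℤ_[p]) :=
    ⟨Ideal.span {MvPowerSeries.X 0}, (Ideal.span_singleton_prime hX.ne_zero).2 hX⟩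
  intro m
  obtain ⟨r, hr, hrm⟩ := Module.exists_smul_eq_zero_of_quotient_smul_top 𝔭 le_rfl h m
  exact ⟨r, fun hr0 ↦ hr (hr0 ▸ 𝔭.asIdeal.zero_mem), hrm⟩
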